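/- arXiv:1510.03240 — 3 statements merged into one kernel-verified Lean document; each statement's English description precedes it below -/
import Mathlib

section
/- Let d ≥ 2 and let Δ be a nonzero traceless Hermitian matrix on C^d ⊗ C^d. Then there exist unitary d×d matrices U and V and a real number λ such that the matrix κ = (1/(d+1))·(U⊗V)|ψ₀⟩⟨ψ₀|(U⊗V)* + (1/(d(d+1)))·I + λΔ is a state, and its partial transpose κ^τ has a negative eigenvalue (i.e., κ^τ is not positive semidefinite). -/
open Matrix
open Kronecker
open scoped ComplexOrder

noncomputable section

/-- A state (density matrix): positive semidefinite with trace 1. -/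
def IsState {n : Type*} [Fintype n] (ρ : Matrix n n ℂ) : Prop :=
  ρ.PosSemidef ∧ ρ.trace = 1

/-- Partial transpose with respect to the second tensor factor. -/
def ptrans {d : ℕ} (ρ : Matrix (Fin d × Fin d) (Fin d × Fin d) ℂ) :
    Matrix (Fin d × Fin d) (Fin d × Fin d) ℂ :=
  Matrix.of fun p q => ρ (p.1, q.2) (q.1, p.2)

/-- The canonical maximally entangled vector `ψ₀ = (1/√d) ∑ⱼ eⱼ ⊗ eⱼ`. -/
def psi0 (d : ℕ) : Fin d × Fin d → ℂ :=
  fun p => if p.1 = p.2 then (((Real.sqrt d)⁻¹ : ℝ) : ℂ) else 0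

/-- The perturbed isotropic state
`κ = (1/(d+1))·(U⊗V)|ψ₀⟩⟨ψ₀|(U⊗V)* + (1/(d(d+1)))·I + λΔ`. -/
def kappa0 {d : ℕ} (U V : Matrix (Fin d) (Fin d) ℂ) (lam : ℝ)
    (Δ : Matrix (Fin d × Fin d) (Fin d × Fin d) ℂ) :
    Matrix (Fin d × Fin d) (Fin d × Fin d) ℂ :=
  (((d : ℂ) + 1)⁻¹) • ((U ⊗ₖ V) * vecMulVec (psi0 d) (star (psi0 d)) * (U ⊗ₖ V)ᴴ)
    + (((d : ℂ) * ((d : ℂ) + 1))⁻¹) • (1 : Matrix (Fin d × Fin d) (Fin d × Fin d) ℂ)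
    + (lam : ℂ) • Δ

/-!
The partial transpose of `|ψ₀⟩⟨ψ₀|` is `F / d`, with `F` the swap operator, and partial
transposition commutes with conjugation by `U ⊗ V` when `V` is real. Hence
`κ^τ = (d(d+1))⁻¹ (W F W* + 1) + λ Δ^τ` with `W = U ⊗ V`, and the first term annihilates `W x`
for every antisymmetric `x`. A diagonal sign matrix `U` and a permutation matrix `V` can be chosen
so that `Δ^τ (W x) ≠ 0`; then `⟨W x, κ^τ W x⟩ = λ ⟨W x, Δ^τ W x⟩`, and for small `λ` of the right
sign this is either negative or zero at a vector outside the kernel of `κ^τ`. Meanwhile `κ` stays a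
state for all small `λ`, since `(d(d+1))⁻¹ + λ Δ ≥ 0` near `λ = 0`.
-/

open Filter Topology

section PartialTranspose

variable {d : ℕ}

@[simp]
lemma ptrans_apply (X : Matrix (Fin d × Fin d) (Fin d × Fin d) ℂ) (i k j l : Fin d) :
    ptrans X (i, k) (j, l) = X (i, l) (j, k) := rfl

lemma ptrans_ptrans (X : Matrix (Fin d × Fin d) (Fin d × Fin d) ℂ) : ptrans (ptrans X) = X := rfl

lemma ptrans_eq_zero_iff {X : Matrix (Fin d × Fin d) (Fin d × Fin d) ℂ} : ptrans X = 0 ↔ X = 0 :=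
  ⟨fun h => by rw [← ptrans_ptrans X, h]; rfl, fun h => by rw [h]; rfl⟩

lemma ptrans_add (X Y : Matrix (Fin d × Fin d) (Fin d × Fin d) ℂ) :
    ptrans (X + Y) = ptrans X + ptrans Y := rfl

lemma ptrans_smul (c : ℂ) (X : Matrix (Fin d × Fin d) (Fin d × Fin d) ℂ) :
    ptrans (c • X) = c • ptrans X := rfl

lemma ptrans_one : ptrans (1 : Matrix (Fin d × Fin d) (Fin d × Fin d) ℂ) = 1 := by
  ext ⟨i, k⟩ ⟨j, l⟩
  simp only [ptrans_apply, one_apply, Prod.mk.injEq]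
  grind

lemma ptrans_kronecker_mul_mul (A B C D : Matrix (Fin d) (Fin d) ℂ)
    (X : Matrix (Fin d × Fin d) (Fin d × Fin d) ℂ) :
    ptrans ((A ⊗ₖ B) * X * (C ⊗ₖ D)) = (A ⊗ₖ Dᵀ) * ptrans X * (C ⊗ₖ Bᵀ) := by
  ext ⟨i, k⟩ ⟨j, l⟩
  simp only [ptrans_apply, mul_apply, Finset.sum_mul, ← Finset.univ_product_univ,
    Finset.sum_product]
  refine Finset.sum_congr rfl fun r₁ _ => ?_
  rw [Finset.sum_comm]
  conv_rhs => rw [Finset.sum_comm]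
  refine Finset.sum_congr rfl fun t₁ _ => ?_
  conv_rhs => rw [Finset.sum_comm]
  refine Finset.sum_congr rfl fun r₂ _ => Finset.sum_congr rfl fun t₂ _ => ?_
  simp only [kroneckerMap_apply, transpose_apply]
  ring

end PartialTranspose

section Swap

variable (ι : Type*) [DecidableEq ι]

def swapMatrix : Matrix (ι × ι) (ι × ι) ℂ := Equiv.Perm.permMatrix ℂ (Equiv.prodComm ι ι)

variable {ι}

lemma swapMatrix_apply (p q : ι × ι) : swapMatrix ι p q = if p.swap = q then 1 else 0 := by
  simp [swapMatrix]

lemma swapMatrix_mulVec [Fintype ι] (v : ι × ι → ℂ) : swapMatrix ι *ᵥ v = fun p => v p.swap :=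
  permMatrix_mulVec (Equiv.prodComm ι ι)

end Swap

lemma psi0_mul_star_psi0 {d : ℕ} (p q : Fin d × Fin d) :
    psi0 d p * star (psi0 d q) = if p.1 = p.2 ∧ q.1 = q.2 then (d : ℂ)⁻¹ else 0 := by
  have h : ((Real.sqrt d : ℂ))⁻¹ * (Real.sqrt d : ℂ)⁻¹ = (d : ℂ)⁻¹ := by
    rw [← mul_inv, ← Complex.ofReal_mul, Real.mul_self_sqrt (Nat.cast_nonneg d),
      Complex.ofReal_natCast]
  by_cases hp : p.1 = p.2 <;> by_cases hq : q.1 = q.2 <;> simp [psi0, hp, hq, h]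

lemma ptrans_vecMulVec_psi0 {d : ℕ} :
    ptrans (vecMulVec (psi0 d) (star (psi0 d))) = (d : ℂ)⁻¹ • swapMatrix (Fin d) := by
  ext ⟨i, k⟩ ⟨j, l⟩
  simp only [ptrans_apply, vecMulVec_apply, Pi.star_apply, psi0_mul_star_psi0, Matrix.smul_apply,
    swapMatrix_apply, Prod.swap_prod_mk, Prod.mk.injEq, smul_eq_mul, mul_ite, mul_one, mul_zero]
  grind

lemma trace_vecMulVec_psi0 {d : ℕ} (hd : d ≠ 0) :
    (vecMulVec (psi0 d) (star (psi0 d))).trace = 1 := by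
  simp only [trace, diag_apply, vecMulVec_apply, Pi.star_apply, psi0_mul_star_psi0, and_self,
    Fintype.sum_prod_type, Finset.sum_ite_eq, Finset.mem_univ, if_true, Finset.sum_const,
    Finset.card_univ, Fintype.card_fin, nsmul_eq_mul]
  exact mul_inv_cancel₀ (Nat.cast_ne_zero.mpr hd)

lemma conj_add_one_mulVec_eq_zero {n : Type*} [Fintype n] [DecidableEq n] {W F : Matrix n n ℂ}
    (hW : W ∈ unitaryGroup n ℂ) {x : n → ℂ} (hx : F *ᵥ x = -x) :
    (W * F * Wᴴ + 1) *ᵥ (W *ᵥ x) = 0 := by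
  rw [add_mulVec, one_mulVec, mulVec_mulVec, mul_assoc, mul_assoc, ← star_eq_conjTranspose,
    mem_unitaryGroup_iff'.mp hW, mul_one, ← mulVec_mulVec, hx, mulVec_neg, neg_add_cancel]

lemma frequently_not_posSemidef_add_smul {n : Type*} [Fintype n] {K M : Matrix n n ℂ}
    {w : n → ℂ} (hK : K *ᵥ w = 0) (hM : M *ᵥ w ≠ 0) :
    ∃ᶠ t : ℝ in 𝓝 0, ¬ (K + (t : ℂ) • M).PosSemidef := by
  set μ := (star w ⬝ᵥ (M *ᵥ w)).re
  have key : ∀ t : ℝ, t ≠ 0 → t * μ ≤ 0 → ¬ (K + (t : ℂ) • M).PosSemidef := by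
    intro t ht htμ hpsd
    have hform : star w ⬝ᵥ ((K + (t : ℂ) • M) *ᵥ w) = t * (star w ⬝ᵥ (M *ᵥ w)) := by
      rw [add_mulVec, hK, zero_add, smul_mulVec, dotProduct_smul, smul_eq_mul]
    have hzero : star w ⬝ᵥ ((K + (t : ℂ) • M) *ᵥ w) = 0 := by
      obtain ⟨hre, him⟩ := Complex.nonneg_iff.mp (hpsd.dotProduct_mulVec_nonneg w)
      refine Complex.ext (le_antisymm ?_ hre) him.symm
      rwa [hform, Complex.re_ofReal_mul]
    have := (hpsd.dotProduct_mulVec_zero_iff w).mp hzero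
    rw [add_mulVec, hK, zero_add, smul_mulVec, smul_eq_zero] at this
    exact hM (this.resolve_left (by exact_mod_cast ht))
  rcases le_total 0 μ with hμ | hμ
  · exact (eventually_nhdsWithin_of_forall (a := (0 : ℝ)) fun t (ht : t ∈ Set.Iio 0) =>
      key t ht.ne (mul_nonpos_of_nonpos_of_nonneg ht.le hμ)).frequently.filter_mono
      nhdsWithin_le_nhds
  · exact (eventually_nhdsWithin_of_forall (a := (0 : ℝ)) fun t (ht : t ∈ Set.Ioi 0) =>
      key t ht.ne' (mul_nonpos_of_nonneg_of_nonpos ht.le hμ)).frequently.filter_mono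
      nhdsWithin_le_nhds

lemma eventually_posSemidef_smul_one_add_smul {n : Type*} [Fintype n] [DecidableEq n]
    {Δ : Matrix n n ℂ} (hΔ : Δ.IsHermitian) {c : ℝ} (hc : 0 < c) :
    ∀ᶠ t : ℝ in 𝓝 0, ((c : ℂ) • 1 + (t : ℂ) • Δ).PosSemidef := by
  set u := hΔ.eigenvectorUnitary
  have hdiag : ∀ t : ℝ, (c : ℂ) • 1 + (t : ℂ) • Δ
      = (u : Matrix n n ℂ) * diagonal (fun i => ((c + t * hΔ.eigenvalues i : ℝ) : ℂ))
        * star (u : Matrix n n ℂ) := by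
    intro t
    have hsplit : diagonal (fun i => ((c + t * hΔ.eigenvalues i : ℝ) : ℂ))
        = (c : ℂ) • 1 + (t : ℂ) • diagonal (RCLike.ofReal ∘ hΔ.eigenvalues) := by
      rw [← diagonal_one, ← diagonal_smul, ← diagonal_smul, diagonal_add]
      congr 1
      ext i
      simp
    conv_lhs => rw [hΔ.spectral_theorem]
    simp only [hsplit, Unitary.conjStarAlgAut_apply, mul_add, add_mul, mul_smul_comm,
      smul_mul_assoc, mul_one, Unitary.mul_star_self_of_mem u.2, u]
  have hev : ∀ i, ∀ᶠ t : ℝ in 𝓝 0, 0 ≤ c + t * hΔ.eigenvalues i := fun i =>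
    (((continuous_id.mul continuous_const).const_add c).tendsto' 0 c (by simp)).eventually
      (eventually_ge_nhds hc)
  filter_upwards [eventually_all.mpr hev] with t ht
  rw [hdiag, Unitary.isUnit_coe.posSemidef_star_right_conjugate_iff, posSemidef_diagonal_iff]
  exact fun i => Complex.zero_le_real.mpr (ht i)

section Witness

variable {ι : Type*} [DecidableEq ι]

lemma exists_perm_apply_eq_apply_eq {a b c e : ι} (hab : a ≠ b) (hce : c ≠ e) :
    ∃ σ : Equiv.Perm ι, σ a = c ∧ σ b = e := by
  set τ := Equiv.swap a c
  have hτb : τ b ≠ c := by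
    by_cases hbc : b = c
    · simpa [τ, hbc] using hab
    · simpa [τ, Equiv.swap_apply_of_ne_of_ne hab.symm hbc] using hbc
  exact ⟨Equiv.swap (τ b) e * τ, by simp [τ, Equiv.swap_apply_of_ne_of_ne hτb.symm hce], by simp⟩

variable [Fintype ι]

lemma diagonal_mem_unitaryGroup {α : Type*} [CommRing α] [StarRing α] {δ : ι → α}
    (hδ : ∀ i, star (δ i) * δ i = 1) : diagonal δ ∈ unitaryGroup ι α := by
  rw [mem_unitaryGroup_iff', star_eq_conjTranspose, diagonal_conjTranspose, diagonal_mul_diagonal,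
    ← diagonal_one]
  exact congrArg diagonal (funext hδ)

lemma permMatrix_mem_unitaryGroup {α : Type*} [CommRing α] [StarRing α] (σ : Equiv.Perm ι) :
    σ.permMatrix α ∈ unitaryGroup ι α := by
  rw [mem_unitaryGroup_iff, star_eq_conjTranspose, conjTranspose_permMatrix, ← permMatrix_mul,
    inv_mul_cancel, permMatrix_one]

lemma diagonal_kronecker_permMatrix_mulVec_single (δ : ι → ℂ) (σ : Equiv.Perm ι) (i j : ι) :
    (diagonal δ ⊗ₖ σ.permMatrix ℂ) *ᵥ Pi.single (i, j) 1 = δ i • Pi.single (i, σ.symm j) 1 := by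
  ext ⟨p, q⟩
  simp only [mulVec_single_one, col_apply, kroneckerMap_apply, diagonal_apply, Pi.smul_apply,
    Pi.single_apply, Prod.mk.injEq, smul_eq_mul, PEquiv.toMatrix_apply, Equiv.toPEquiv_apply,
    Option.mem_some_iff, Equiv.eq_symm_apply]
  by_cases hp : p = i <;> simp [hp]

lemma swapMatrix_mulVec_single (q : ι × ι) (x : ℂ) :
    swapMatrix ι *ᵥ Pi.single q x = Pi.single q.swap x := by
  ext p
  simp only [swapMatrix_mulVec, Pi.single_apply, Prod.swap_eq_iff_eq_swap]

lemma exists_mulVec_single_ne_zero {m n α : Type*} [Fintype n] [DecidableEq n]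
    [NonAssocSemiring α] {M : Matrix m n α} (hM : M ≠ 0) : ∃ j, M *ᵥ Pi.single j 1 ≠ 0 := by
  by_contra! h
  exact hM (ext_of_mulVec_single fun j => by rw [h j, zero_mulVec])

lemma exists_sign_mulVec_smul_sub_ne_zero {m n : Type*} [Fintype n] {M : Matrix m n ℂ}
    {v : n → ℂ} (hv : M *ᵥ v ≠ 0) (u : n → ℂ) :
    ∃ s : ℂ, (s = 1 ∨ s = -1) ∧ M *ᵥ (s • u - v) ≠ 0 := by
  by_contra! h
  have h₁ := h 1 (.inl rfl)
  have h₂ := h (-1) (.inr rfl)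
  rw [mulVec_sub, mulVec_smul] at h₁ h₂
  apply hv
  linear_combination (norm := module) (-2⁻¹ : ℂ) • (h₁ + h₂)

lemma exists_unitary_mulVec_antisymmetric_ne_zero [Nontrivial ι]
    {M : Matrix (ι × ι) (ι × ι) ℂ} (hM : M ≠ 0) :
    ∃ U V : Matrix ι ι ℂ, U ∈ unitaryGroup ι ℂ ∧ V ∈ unitaryGroup ι ℂ ∧ Vᴴ = Vᵀ ∧
      ∃ x, swapMatrix ι *ᵥ x = -x ∧ M *ᵥ ((U ⊗ₖ V) *ᵥ x) ≠ 0 := by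
  obtain ⟨⟨c, e⟩, hce⟩ := exists_mulVec_single_ne_zero hM
  obtain ⟨a, hac⟩ := exists_ne c
  obtain ⟨b, hbe⟩ := exists_ne e
  obtain ⟨s, hs, hMs⟩ := exists_sign_mulVec_smul_sub_ne_zero hce (Pi.single (a, b) 1)
  obtain ⟨σ, hσb, hσe⟩ := exists_perm_apply_eq_apply_eq hbe hac.symm
  refine ⟨diagonal (Function.update 1 a s), σ.permMatrix ℂ, diagonal_mem_unitaryGroup ?_,
    permMatrix_mem_unitaryGroup σ, by simp, Pi.single (a, c) 1 - Pi.single (c, a) 1, ?_, ?_⟩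
  · intro i
    rcases hs with rfl | rfl <;> by_cases hi : i = a <;> simp [hi]
  · rw [mulVec_sub, swapMatrix_mulVec_single, swapMatrix_mulVec_single, neg_sub]
    rfl
  · rwa [mulVec_sub, diagonal_kronecker_permMatrix_mulVec_single,
      diagonal_kronecker_permMatrix_mulVec_single, Function.update_self,
      Function.update_of_ne hac.symm, σ.symm_apply_eq.mpr hσb.symm,
      σ.symm_apply_eq.mpr hσe.symm, Pi.one_apply, one_smul]

end Witness

section Kappa

variable {d : ℕ} {U V : Matrix (Fin d) (Fin d) ℂ} {Δ : Matrix (Fin d × Fin d) (Fin d × Fin d) ℂ}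

lemma ptrans_conj_kronecker_of_conjTranspose_eq_transpose (A : Matrix (Fin d) (Fin d) ℂ)
    {B : Matrix (Fin d) (Fin d) ℂ} (hB : Bᴴ = Bᵀ) (X : Matrix (Fin d × Fin d) (Fin d × Fin d) ℂ) :
    ptrans ((A ⊗ₖ B) * X * (A ⊗ₖ B)ᴴ) = (A ⊗ₖ B) * ptrans X * (A ⊗ₖ B)ᴴ := by
  rw [conjTranspose_kronecker, ptrans_kronecker_mul_mul, hB, transpose_transpose]

lemma ptrans_kappa0 (hV : Vᴴ = Vᵀ) (t : ℝ) :
    ptrans (kappa0 U V t Δ)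
      = ((d : ℂ) * ((d : ℂ) + 1))⁻¹ • ((U ⊗ₖ V) * swapMatrix (Fin d) * (U ⊗ₖ V)ᴴ + 1)
        + (t : ℂ) • ptrans Δ := by
  rw [kappa0, ptrans_add, ptrans_add, ptrans_smul, ptrans_smul, ptrans_smul, ptrans_one,
    ptrans_conj_kronecker_of_conjTranspose_eq_transpose U hV, ptrans_vecMulVec_psi0,
    mul_smul_comm, smul_mul_assoc, smul_smul, smul_add, mul_comm, mul_inv]

lemma isState_kappa0 (hd : d ≠ 0) (hU : U ∈ unitaryGroup (Fin d) ℂ)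
    (hV : V ∈ unitaryGroup (Fin d) ℂ) (hΔ : Δ.trace = 0) {t : ℝ}
    (ht : (((((d : ℝ) * (d + 1))⁻¹ : ℝ) : ℂ) • 1 + (t : ℂ) • Δ).PosSemidef) :
    IsState (kappa0 U V t Δ) := by
  have hW := kronecker_mem_unitary hU hV
  constructor
  · rw [kappa0, add_assoc]
    refine (((posSemidef_vecMulVec_self_star _).mul_mul_conjTranspose_same _).smul ?_).add ?_
    · positivity
    · convert ht using 3
      push_cast
      ring
  · rw [kappa0, trace_add, trace_add, trace_smul, trace_smul, trace_smul, hΔ, trace_mul_cycle,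
      ← star_eq_conjTranspose, mem_unitaryGroup_iff'.mp hW, one_mul, trace_vecMulVec_psi0 hd,
      trace_one]
    simp only [smul_eq_mul, mul_one, mul_zero, add_zero, Fintype.card_prod, Fintype.card_fin,
      Nat.cast_mul]
    field_simp
    ring

end Kappa

theorem stmt0 (d : ℕ) (hd : 2 ≤ d)
    (Δ : Matrix (Fin d × Fin d) (Fin d × Fin d) ℂ)
    (hΔ0 : Δ ≠ 0) (hΔH : Δ.IsHermitian) (hΔtr : Δ.trace = 0) :
    ∃ (U V : Matrix (Fin d) (Fin d) ℂ), U ∈ Matrix.unitaryGroup (Fin d) ℂ ∧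
      V ∈ Matrix.unitaryGroup (Fin d) ℂ ∧ ∃ lam : ℝ,
        IsState (kappa0 U V lam Δ) ∧ ¬ (ptrans (kappa0 U V lam Δ)).PosSemidef := by
  have : Nontrivial (Fin d) := Fin.nontrivial_iff_two_le.mpr hd
  obtain ⟨U, V, hU, hV, hVreal, x, hx, hΔx⟩ :=
    exists_unitary_mulVec_antisymmetric_ne_zero (mt ptrans_eq_zero_iff.mp hΔ0)
  have hState : ∀ᶠ t : ℝ in 𝓝 0, IsState (kappa0 U V t Δ) :=
    (eventually_posSemidef_smul_one_add_smul hΔH (c := ((d : ℝ) * (d + 1))⁻¹)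
      (by positivity)).mono fun t ht => isState_kappa0 (by omega) hU hV hΔtr ht
  have hNPT : ∃ᶠ t : ℝ in 𝓝 0, ¬ (ptrans (kappa0 U V t Δ)).PosSemidef := by
    simp only [ptrans_kappa0 hVreal]
    refine frequently_not_posSemidef_add_smul ?_ hΔx
    rw [smul_mulVec, conj_add_one_mulVec_eq_zero (kronecker_mem_unitary hU hV) hx, smul_zero]
  obtain ⟨t, hNPT, hState⟩ := (hNPT.and_eventually hState).exists
  exact ⟨U, V, hU, hV, t, hState, hNPT⟩
end
end

section
/- Let d ≥ 2 and let Δ be a nonzero Hermitian matrix on C^d ⊗ C^d. Then there exist unitary d×d matrices U and V and indices i, j ∈ {1, 2} such that ⟨e_i ⊗ e_j, (U⊗V)* Δ^τ (U⊗V) (e_1 ⊗ e_2 − e_2 ⊗ e_1)⟩ ≠ 0, where {e_j} denotes the standard basis of C^d. -/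
open Matrix
open Kronecker
open scoped ComplexOrder

noncomputable section

namespace Stmt1Aux

variable {d : ℕ}

/-- Generalized permutation matrix: column `l` is `(if l = z then ζ else 1) • e_{σ l}`. -/
def pu (σ : Equiv.Perm (Fin d)) (ζ : ℂ) (z : Fin d) : Matrix (Fin d) (Fin d) ℂ :=
  Matrix.of fun k l => (if l = z then ζ else 1) * (if σ l = k then 1 else 0)

lemma pu_unitary (σ : Equiv.Perm (Fin d)) (ζ : ℂ) (hζ : star ζ * ζ = 1) (z : Fin d) :
    pu σ ζ z ∈ Matrix.unitaryGroup (Fin d) ℂ := by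
  rw [Matrix.mem_unitaryGroup_iff']
  ext l l'
  simp only [Matrix.mul_apply, Matrix.star_apply, pu, Matrix.of_apply, star_mul',
    Matrix.one_apply, mul_ite, ite_mul, one_mul, mul_one, mul_zero, zero_mul,
    apply_ite (star : ℂ → ℂ), star_one, Finset.sum_ite_eq, Finset.mem_univ, if_true,
    EmbeddingLike.apply_eq_iff_eq]
  rcases eq_or_ne l l' with rfl | h
  · have hζ2 : (starRingEnd ℂ) ζ * ζ = 1 := hζ
    by_cases hz : l = z <;> simp [hz, hζ2]
  · simp [h, Ne.symm h]

lemma pu_entry (σ τ : Equiv.Perm (Fin d)) (ζ η : ℂ) (z : Fin d)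
    (Γ : Matrix (Fin d × Fin d) (Fin d × Fin d) ℂ) (i j k l : Fin d) :
    ((pu σ ζ z ⊗ₖ pu τ η z)ᴴ * Γ * (pu σ ζ z ⊗ₖ pu τ η z)) (i, j) (k, l)
      = star ((if i = z then ζ else 1) * (if j = z then η else 1)) *
        ((if k = z then ζ else 1) * (if l = z then η else 1)) * Γ (σ i, τ j) (σ k, τ l) := by
  by_cases hi : i = z <;> by_cases hj : j = z <;> by_cases hk : k = z <;> by_cases hl : l = z <;>
    simp [Matrix.mul_apply, Matrix.conjTranspose_apply, pu, hi, hj, hk, hl,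
      Fintype.sum_prod_type, mul_ite, ite_mul, Finset.sum_ite_eq, star_mul',
      apply_ite (starRingEnd ℂ), map_zero, _root_.map_mul] <;> ring

lemma exists_perm (x y c a : Fin d) (hxy : x ≠ y) (hca : c ≠ a) :
    ∃ σ : Equiv.Perm (Fin d), σ x = c ∧ σ y = a := by
  set b := Equiv.swap x c a with hb
  have hbx : x ≠ b := by
    intro h
    apply hca
    have h2 := congrArg (Equiv.swap x c) h
    rwa [Equiv.swap_apply_left, hb, Equiv.swap_apply_self] at h2
  refine ⟨(Equiv.swap y b).trans (Equiv.swap x c), ?_, ?_⟩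
  · simp [Equiv.trans_apply, Equiv.swap_apply_of_ne_of_ne hxy hbx]
  · simp [Equiv.trans_apply, hb, Equiv.swap_apply_self]

end Stmt1Aux

/-- For a nonzero Hermitian `Δ` there are local unitaries `U, V` and indices `i, j ∈ {1,2}`
such that `⟨eᵢ ⊗ eⱼ, (U⊗V)* Δᵀ (U⊗V) (e₁⊗e₂ − e₂⊗e₁)⟩ ≠ 0`; since `eᵢ ⊗ eⱼ` is a standard
basis vector, this inner product is the corresponding difference of matrix entries. -/
theorem stmt1 (d : ℕ) (hd : 2 ≤ d)
    (Δ : Matrix (Fin d × Fin d) (Fin d × Fin d) ℂ)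
    (hΔ0 : Δ ≠ 0) (hΔH : Δ.IsHermitian) :
    ∃ (U V : Matrix (Fin d) (Fin d) ℂ), U ∈ Matrix.unitaryGroup (Fin d) ℂ ∧
      V ∈ Matrix.unitaryGroup (Fin d) ℂ ∧
      ∃ i j : Fin d, (i : ℕ) < 2 ∧ (j : ℕ) < 2 ∧
        ((U ⊗ₖ V)ᴴ * ptrans Δ * (U ⊗ₖ V)) (i, j) ((⟨0, by omega⟩ : Fin d), (⟨1, by omega⟩ : Fin d))
          - ((U ⊗ₖ V)ᴴ * ptrans Δ * (U ⊗ₖ V)) (i, j) ((⟨1, by omega⟩ : Fin d), (⟨0, by omega⟩ : Fin d))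
          ≠ 0 := by
  classical
  set e0 : Fin d := ⟨0, by omega⟩ with he0
  set e1 : Fin d := ⟨1, by omega⟩ with he1
  have he : e0 ≠ e1 := by simp [he0, he1, Fin.ext_iff]
  set Γ := ptrans Δ with hΓ
  have hΓ0 : Γ ≠ 0 := by
    intro h
    apply hΔ0
    ext p q
    have h2 : Γ (p.1, q.2) (q.1, p.2) = 0 := by rw [h]; rfl
    simpa [hΓ, ptrans] using h2
  obtain ⟨p, hp⟩ : ∃ p, Γ p ≠ 0 := by
    by_contra h; push_neg at h; exact hΓ0 (by ext p q; simp [h p])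
  obtain ⟨q, hq⟩ : ∃ q, Γ p q ≠ 0 := by
    by_contra h; push_neg at h; exact hp (by ext q; simp [h q])
  obtain ⟨a, b⟩ := p
  obtain ⟨c, e⟩ := q
  set a' : Fin d := if a = c then (if c = e0 then e1 else e0) else a with ha'def
  set b' : Fin d := if b = e then (if e = e0 then e1 else e0) else b with hb'def
  have hca' : c ≠ a' := by
    rw [ha'def]
    by_cases h : a = c
    · rw [if_pos h]
      by_cases h2 : c = e0
      · rw [if_pos h2, h2]; exact he
      · rw [if_neg h2]; exact h2
    · rw [if_neg h]; exact fun hh => h hh.symm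
  have hb'e : b' ≠ e := by
    rw [hb'def]
    by_cases h : b = e
    · rw [if_pos h]
      by_cases h2 : e = e0
      · rw [if_pos h2, h2]; exact he.symm
      · rw [if_neg h2]; exact fun hh => h2 hh.symm
    · rw [if_neg h]; exact h
  obtain ⟨σ, hσ0, hσ1⟩ := Stmt1Aux.exists_perm e0 e1 c a' he hca'
  obtain ⟨τ, hτ0, hτ1⟩ := Stmt1Aux.exists_perm e0 e1 b' e he hb'e
  set i : Fin d := if a = c then e0 else e1 with hidef
  set j : Fin d := if b = e then e1 else e0 with hjdef
  have hσi : σ i = a := by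
    by_cases h : a = c
    · rw [hidef, if_pos h, hσ0, h]
    · rw [hidef, if_neg h, hσ1, ha'def, if_neg h]
  have hτj : τ j = b := by
    by_cases h : b = e
    · rw [hjdef, if_pos h, hτ1, h]
    · rw [hjdef, if_neg h, hτ0, hb'def, if_neg h]
  set A : ℂ := Γ (a, b) (c, e) with hA
  set B : ℂ := Γ (a, b) (a', b') with hB
  set ζ : ℂ := if A = B then Complex.I else 1 with hζdef
  have hζunit : star ζ * ζ = 1 := by
    by_cases h : A = B <;> simp [hζdef, h, Complex.star_def]
  have hζne : ζ ≠ 0 := by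
    by_cases h : A = B <;> simp [hζdef, h, Complex.I_ne_zero]
  refine ⟨Stmt1Aux.pu σ ζ e1, Stmt1Aux.pu τ 1 e1,
    Stmt1Aux.pu_unitary σ ζ hζunit e1, Stmt1Aux.pu_unitary τ 1 (by simp) e1, i, j, ?_, ?_, ?_⟩
  · by_cases h : a = c <;> simp [hidef, h, he0, he1]
  · by_cases h : b = e <;> simp [hjdef, h, he0, he1]
  · rw [Stmt1Aux.pu_entry, Stmt1Aux.pu_entry]
    simp only [hσi, hτj, hσ0, hσ1, hτ0, hτ1, ite_self, if_neg he, if_pos rfl, if_true, ite_true,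
      mul_one, one_mul, ← hA, ← hB]
    set phi : ℂ := if i = e1 then ζ else 1 with hphidef
    have hphi : phi ≠ 0 := by
      rw [hphidef]; split <;> simp [hζne]
    have key : A - ζ * B ≠ 0 := by
      by_cases h : A = B
      · rw [hζdef, if_pos h, ← h]
        intro hcon
        apply hq
        have h2 : A * (1 - Complex.I) = 0 := by linear_combination hcon
        rcases mul_eq_zero.1 h2 with h1 | h1
        · exact h1
        · exfalso
          have h3 : (Complex.I : ℂ) = 1 := by linear_combination -h1
          simpa using congrArg Complex.im h3
      · rw [hζdef, if_neg h, one_mul]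
        exact sub_ne_zero_of_ne h
    have hne : star phi * (A - ζ * B) ≠ 0 := mul_ne_zero (star_ne_zero.mpr hphi) key
    intro hc
    exact hne (by linear_combination hc)
end
end

section
/- Let ρ be a classical-quantum state on C^d ⊗ C^d. For k, l ∈ {1, ..., d}, let A_{kl}(ρ) be the d×d matrix with entries (A_{kl}(ρ))_{ij} = ρ_{(i,k),(j,l)}. Then each A_{kl}(ρ) is a normal matrix, and the matrices A_{kl}(ρ) pairwise commute: A_{kl}(ρ)·A_{k'l'}(ρ) = A_{k'l'}(ρ)·A_{kl}(ρ) for all k, l, k', l'. -/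
open Matrix
open Kronecker
open scoped ComplexOrder

noncomputable section

/-- A family of `d` vectors in `ℂ^d` forming an orthonormal basis. -/
def IsONB {d : ℕ} (φ : Fin d → Fin d → ℂ) : Prop :=
  ∀ i j, star (φ i) ⬝ᵥ φ j = if i = j then 1 else 0

/-- Classical-quantum states: `ρ = ∑ᵢ cᵢ |φᵢ⟩⟨φᵢ| ⊗ ηᵢ` for an orthonormal basis `{φᵢ}`,
nonnegative `cᵢ` summing to `1`, and states `ηᵢ`. -/
def IsCQ {d : ℕ} (ρ : Matrix (Fin d × Fin d) (Fin d × Fin d) ℂ) : Prop :=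
  ∃ (φ : Fin d → Fin d → ℂ) (c : Fin d → ℝ) (η : Fin d → Matrix (Fin d) (Fin d) ℂ),
    IsONB φ ∧ (∀ i, 0 ≤ c i) ∧ ((∑ i, c i) = 1) ∧ (∀ i, IsState (η i)) ∧
    ρ = ∑ i, (c i : ℂ) • (vecMulVec (φ i) (star (φ i)) ⊗ₖ η i)

/-- Quantum-classical states: `ρ = ∑ᵢ cᵢ σᵢ ⊗ |χᵢ⟩⟨χᵢ|`. -/
def IsQC {d : ℕ} (ρ : Matrix (Fin d × Fin d) (Fin d × Fin d) ℂ) : Prop :=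
  ∃ (χ : Fin d → Fin d → ℂ) (c : Fin d → ℝ) (σ : Fin d → Matrix (Fin d) (Fin d) ℂ),
    IsONB χ ∧ (∀ i, 0 ≤ c i) ∧ ((∑ i, c i) = 1) ∧ (∀ i, IsState (σ i)) ∧
    ρ = ∑ i, (c i : ℂ) • (σ i ⊗ₖ vecMulVec (χ i) (star (χ i)))

/-- Classical-classical states: `ρ = ∑ᵢⱼ cᵢⱼ |φᵢ⟩⟨φᵢ| ⊗ |χⱼ⟩⟨χⱼ|`. -/
def IsCC {d : ℕ} (ρ : Matrix (Fin d × Fin d) (Fin d × Fin d) ℂ) : Prop :=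
  ∃ (φ χ : Fin d → Fin d → ℂ) (c : Fin d → Fin d → ℝ),
    IsONB φ ∧ IsONB χ ∧ (∀ i j, 0 ≤ c i j) ∧ ((∑ i, ∑ j, c i j) = 1) ∧
    ρ = ∑ i, ∑ j, (c i j : ℂ) • (vecMulVec (φ i) (star (φ i)) ⊗ₖ vecMulVec (χ j) (star (χ j)))

/-- The block `A_{kl}(ρ)` with entries `(A_{kl}(ρ))_{ij} = ρ_{(i,k),(j,l)}`. -/
def Ablock {d : ℕ} (ρ : Matrix (Fin d × Fin d) (Fin d × Fin d) ℂ) (k l : Fin d) :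
    Matrix (Fin d) (Fin d) ℂ :=
  Matrix.of fun i j => ρ (i, k) (j, l)

theorem stmt18 (d : ℕ) (ρ : Matrix (Fin d × Fin d) (Fin d × Fin d) ℂ) (hρ : IsCQ ρ) :
    (∀ k l : Fin d, Ablock ρ k l * (Ablock ρ k l)ᴴ = (Ablock ρ k l)ᴴ * Ablock ρ k l) ∧
      (∀ k l k' l' : Fin d, Ablock ρ k l * Ablock ρ k' l' = Ablock ρ k' l' * Ablock ρ k l) := by
  obtain ⟨φ, c, η, hφ, -, -, -, hρeq⟩ := hρ
  set P : Fin d → Matrix (Fin d) (Fin d) ℂ := fun m => vecMulVec (φ m) (star (φ m)) with hPdef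
  have hP : ∀ m m', P m * P m' = if m = m' then P m else 0 := by
    intro m m'
    have horth := hφ m m'
    ext i j
    have : ∑ k, (φ m i * star (φ m k)) * (φ m' k * star (φ m' j))
        = (star (φ m) ⬝ᵥ φ m') * (φ m i * star (φ m' j)) := by
      simp only [dotProduct, Finset.sum_mul, Pi.star_apply]
      exact Finset.sum_congr rfl fun k _ => by ring
    simp only [hPdef, mul_apply, vecMulVec_apply, Pi.star_apply] at this ⊢
    rw [this, horth]
    by_cases h : m = m' <;> simp [h, vecMulVec_apply]
  have hPh : ∀ m, (P m)ᴴ = P m := by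
    intro m
    ext i j
    simp [hPdef, vecMulVec_apply, mul_comm]
  have key : ∀ k l, Ablock ρ k l = ∑ m, ((c m : ℂ) * η m k l) • P m := by
    intro k l
    ext i j
    simp only [Ablock, hρeq, Matrix.of_apply, Finset.sum_apply, Matrix.sum_apply,
      Matrix.smul_apply, kroneckerMap_apply, vecMulVec_apply, Pi.star_apply, smul_eq_mul, hPdef]
    exact Finset.sum_congr rfl fun m _ => by ring
  have prod : ∀ (a b : Fin d → ℂ),
      (∑ m, a m • P m) * (∑ m, b m • P m) = ∑ m, (a m * b m) • P m := by
    intro a b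
    rw [Finset.sum_mul]
    refine Finset.sum_congr rfl fun m _ => ?_
    rw [Finset.mul_sum]
    have : ∀ m', (a m • P m) * (b m' • P m') = (a m * b m') • (P m * P m') := by
      intro m'
      rw [smul_mul_assoc, mul_smul_comm, smul_smul]
    simp_rw [this, hP]
    rw [Finset.sum_eq_single m]
    · simp
    · intro m' _ hm'; simp [Ne.symm hm']
    · intro h; simp at h
  have hct : ∀ (a : Fin d → ℂ), (∑ m, a m • P m)ᴴ = ∑ m, (starRingEnd ℂ) (a m) • P m := by
    intro a
    rw [conjTranspose_sum]
    refine Finset.sum_congr rfl fun m _ => ?_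
    rw [conjTranspose_smul, hPh m]
    rfl
  constructor
  · intro k l
    rw [key k l, hct]
    rw [prod, prod]
    exact Finset.sum_congr rfl fun m _ => by rw [mul_comm]
  · intro k l k' l'
    rw [key k l, key k' l', prod, prod]
    exact Finset.sum_congr rfl fun m _ => by rw [mul_comm]
end
end
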